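/- arXiv:1601.06376 — 4 statements merged into one kernel-verified Lean document; each statement's English description precedes it below -/
import Mathlib

section
/- The optimization problem (P2) with linear objective ∑_{n=2}^N R_r[n], constraints ∑_{i=2}^n R_r[i] ≤ ∑_{i=1}^{n-1} log₂(1 + p_s[i]·γ_SR[i]) for all n, R_r[n] ≤ log₂(1 + p_r[n]·γ_RD[n]), power sum constraints ∑ p_s[n] ≤ E_s, ∑ p_r[n] ≤ E_r, and nonnegativity, has the same optimal value as the problem (P1) obtained by replacing each R_r[n] with log₂(1 + p_r[n]·γ_RD[n]) in both objective and causality constraints. In particular every optimal solution of (P2) can be modified (by decreasing some p_r[n]) to one where all rate constraints R_r[n] ≤ log₂(1+p_r[n]γ_RD[n]) hold with equality. -/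
open Finset Real

/-- Feasibility for problem (P1). -/
def P1Feas (N : ℕ) (γSR γRD : ℕ → ℝ) (Es Er : ℝ) (ps pr : ℕ → ℝ) : Prop :=
  (∀ n ∈ Finset.Icc 1 (N - 1), 0 ≤ ps n) ∧
  (∀ n ∈ Finset.Icc 2 N, 0 ≤ pr n) ∧
  (∑ n ∈ Finset.Icc 1 (N - 1), ps n) ≤ Es ∧
  (∑ n ∈ Finset.Icc 2 N, pr n) ≤ Er ∧
  (∀ n ∈ Finset.Icc 2 N,
    (∑ i ∈ Finset.Icc 2 n, Real.logb 2 (1 + pr i * γRD i)) ≤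
      ∑ i ∈ Finset.Icc 1 (n - 1), Real.logb 2 (1 + ps i * γSR i))

/-- Objective of problem (P1). -/
noncomputable def P1Obj (N : ℕ) (γRD : ℕ → ℝ) (pr : ℕ → ℝ) : ℝ :=
  ∑ n ∈ Finset.Icc 2 N, Real.logb 2 (1 + pr n * γRD n)

/-- Feasibility for problem (P2), with slack rate variables `Rr`. -/
def P2Feas (N : ℕ) (γSR γRD : ℕ → ℝ) (Es Er : ℝ) (ps pr Rr : ℕ → ℝ) : Prop :=
  (∀ n ∈ Finset.Icc 1 (N - 1), 0 ≤ ps n) ∧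
  (∀ n ∈ Finset.Icc 2 N, 0 ≤ pr n) ∧
  (∀ n ∈ Finset.Icc 2 N, 0 ≤ Rr n) ∧
  (∑ n ∈ Finset.Icc 1 (N - 1), ps n) ≤ Es ∧
  (∑ n ∈ Finset.Icc 2 N, pr n) ≤ Er ∧
  (∀ n ∈ Finset.Icc 2 N, Rr n ≤ Real.logb 2 (1 + pr n * γRD n)) ∧
  (∀ n ∈ Finset.Icc 2 N,
    (∑ i ∈ Finset.Icc 2 n, Rr i) ≤
      ∑ i ∈ Finset.Icc 1 (n - 1), Real.logb 2 (1 + ps i * γSR i))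

/-!
In (P2) the rate `Rr n` is only bounded above by the capacity
`log₂ (1 + pr n γ n)`, which is a strictly increasing function of the power. Lowering each
relay power to `(2 ^ Rr n - 1) / γ n`, the power at which the capacity is exactly `Rr n`,
keeps every constraint of (P2) and makes the rate constraints tight; a tight feasible point
of (P2) is a feasible point of (P1) with the same objective. Conversely every feasible point
of (P1) gives a tight feasible point of (P2). Hence the two problems have the same set of
attainable objective values.
-/

noncomputable def powerForRate (γ R : ℝ) : ℝ := (2 ^ R - 1) / γ

lemma logb_one_add_powerForRate_mul {γ : ℝ} (hγ : γ ≠ 0) (R : ℝ) :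
    logb 2 (1 + powerForRate γ R * γ) = R := by
  rw [powerForRate, div_mul_cancel₀ _ hγ, add_sub_cancel, logb_rpow two_pos (by norm_num)]

lemma powerForRate_nonneg {γ R : ℝ} (hγ : 0 ≤ γ) (hR : 0 ≤ R) : 0 ≤ powerForRate γ R :=
  div_nonneg (sub_nonneg.2 (one_le_rpow one_le_two hR)) hγ

lemma powerForRate_le {γ p R : ℝ} (hγ : 0 < γ) (hp : 0 ≤ p)
    (hR : R ≤ logb 2 (1 + p * γ)) : powerForRate γ R ≤ p := by
  have hpos : 0 < 1 + p * γ := by positivity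
  have h2R : (2 : ℝ) ^ R ≤ 1 + p * γ := by
    calc (2 : ℝ) ^ R ≤ 2 ^ logb 2 (1 + p * γ) := rpow_le_rpow_of_exponent_le one_le_two hR
      _ = 1 + p * γ := rpow_logb two_pos (by norm_num) hpos
  rw [powerForRate, div_le_iff₀ hγ]
  linarith

section Relay

variable {N : ℕ} {γSR γRD : ℕ → ℝ} {Es Er : ℝ}

lemma P2Feas.exists_rate_tight {ps pr Rr : ℕ → ℝ} (hRD : ∀ n ∈ Icc 2 N, 0 < γRD n)
    (h : P2Feas N γSR γRD Es Er ps pr Rr) :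
    ∃ pr', (∀ n ∈ Icc 2 N, pr' n ≤ pr n) ∧ P2Feas N γSR γRD Es Er ps pr' Rr ∧
      ∀ n ∈ Icc 2 N, Rr n = logb 2 (1 + pr' n * γRD n) := by
  obtain ⟨hps, hpr, hRr, hEs, hEr, hrate, hcaus⟩ := h
  set pr' : ℕ → ℝ := fun n ↦ powerForRate (γRD n) (Rr n)
  have hle : ∀ n ∈ Icc 2 N, pr' n ≤ pr n := fun n hn ↦
    powerForRate_le (hRD n hn) (hpr n hn) (hrate n hn)
  have htight : ∀ n ∈ Icc 2 N, Rr n = logb 2 (1 + pr' n * γRD n) := fun n hn ↦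
    (logb_one_add_powerForRate_mul (hRD n hn).ne' _).symm
  refine ⟨pr', hle, ⟨hps, fun n hn ↦ powerForRate_nonneg (hRD n hn).le (hRr n hn), hRr, hEs,
    (sum_le_sum hle).trans hEr, fun n hn ↦ (htight n hn).le, hcaus⟩, htight⟩

lemma P2Feas.toP1Feas {ps pr Rr : ℕ → ℝ} (h : P2Feas N γSR γRD Es Er ps pr Rr)
    (htight : ∀ n ∈ Icc 2 N, Rr n = logb 2 (1 + pr n * γRD n)) :
    P1Feas N γSR γRD Es Er ps pr := by
  obtain ⟨hps, hpr, -, hEs, hEr, -, hcaus⟩ := h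
  refine ⟨hps, hpr, hEs, hEr, fun n hn ↦ ?_⟩
  have hsub : Icc 2 n ⊆ Icc 2 N := Icc_subset_Icc le_rfl (mem_Icc.1 hn).2
  rw [← sum_congr rfl fun i hi ↦ htight i (hsub hi)]
  exact hcaus n hn

lemma P1Feas.toP2Feas {ps pr : ℕ → ℝ} (hRD : ∀ n ∈ Icc 2 N, 0 ≤ γRD n)
    (h : P1Feas N γSR γRD Es Er ps pr) :
    P2Feas N γSR γRD Es Er ps pr fun n ↦ logb 2 (1 + pr n * γRD n) := by
  obtain ⟨hps, hpr, hEs, hEr, hcaus⟩ := h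
  refine ⟨hps, hpr, fun n hn ↦ logb_nonneg one_lt_two ?_, hEs, hEr, fun _ _ ↦ le_rfl, hcaus⟩
  have := mul_nonneg (hpr n hn) (hRD n hn)
  linarith

lemma P1_values_eq_P2_values (hRD : ∀ n ∈ Icc 2 N, 0 < γRD n) :
    {v : ℝ | ∃ ps pr, P1Feas N γSR γRD Es Er ps pr ∧ v = P1Obj N γRD pr} =
      {v : ℝ | ∃ ps pr Rr, P2Feas N γSR γRD Es Er ps pr Rr ∧ v = ∑ n ∈ Icc 2 N, Rr n} := by
  ext v
  constructor
  · rintro ⟨ps, pr, h, rfl⟩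
    exact ⟨ps, pr, _, h.toP2Feas fun n hn ↦ (hRD n hn).le, rfl⟩
  · rintro ⟨ps, pr, Rr, h, rfl⟩
    obtain ⟨pr', -, h', htight⟩ := h.exists_rate_tight hRD
    exact ⟨ps, pr', h'.toP1Feas htight, sum_congr rfl htight⟩

end Relay

theorem stmt_0_general (N : ℕ) (γSR γRD : ℕ → ℝ)
    (hRD : ∀ n ∈ Finset.Icc 2 N, 0 < γRD n)
    (Es Er : ℝ) :
    sSup {v : ℝ | ∃ ps pr, P1Feas N γSR γRD Es Er ps pr ∧ v = P1Obj N γRD pr} =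
      sSup {v : ℝ | ∃ ps pr Rr, P2Feas N γSR γRD Es Er ps pr Rr ∧
        v = ∑ n ∈ Finset.Icc 2 N, Rr n} ∧
    (∀ ps pr Rr, P2Feas N γSR γRD Es Er ps pr Rr →
      (∀ ps' pr' Rr', P2Feas N γSR γRD Es Er ps' pr' Rr' →
        (∑ n ∈ Finset.Icc 2 N, Rr' n) ≤ ∑ n ∈ Finset.Icc 2 N, Rr n) →
      ∃ pr', (∀ n ∈ Finset.Icc 2 N, pr' n ≤ pr n) ∧
        P2Feas N γSR γRD Es Er ps pr' Rr ∧
        (∀ n ∈ Finset.Icc 2 N, Rr n = Real.logb 2 (1 + pr' n * γRD n))) :=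
  ⟨congrArg sSup (P1_values_eq_P2_values hRD), fun _ _ _ h _ ↦ h.exists_rate_tight hRD⟩

/-- (P1) and (P2) have the same optimal value, and every optimal solution of (P2)
can be turned, by decreasing relay powers, into one where all rate constraints
hold with equality. -/
theorem stmt_0 (N : ℕ) (hN : 2 ≤ N) (γSR γRD : ℕ → ℝ)
    (hSR : ∀ n ∈ Finset.Icc 1 (N - 1), 0 < γSR n)
    (hRD : ∀ n ∈ Finset.Icc 2 N, 0 < γRD n)
    (Es Er : ℝ) (hEs : 0 ≤ Es) (hEr : 0 ≤ Er) :
    sSup {v : ℝ | ∃ ps pr, P1Feas N γSR γRD Es Er ps pr ∧ v = P1Obj N γRD pr} =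
      sSup {v : ℝ | ∃ ps pr Rr, P2Feas N γSR γRD Es Er ps pr Rr ∧
        v = ∑ n ∈ Finset.Icc 2 N, Rr n} ∧
    (∀ ps pr Rr, P2Feas N γSR γRD Es Er ps pr Rr →
      (∀ ps' pr' Rr', P2Feas N γSR γRD Es Er ps' pr' Rr' →
        (∑ n ∈ Finset.Icc 2 N, Rr' n) ≤ ∑ n ∈ Finset.Icc 2 N, Rr n) →
      ∃ pr', (∀ n ∈ Finset.Icc 2 N, pr' n ≤ pr n) ∧
        P2Feas N γSR γRD Es Er ps pr' Rr ∧
        (∀ n ∈ Finset.Icc 2 N, Rr n = Real.logb 2 (1 + pr' n * γRD n))) :=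
  stmt_0_general N γSR γRD hRD Es Er
end

section
/- (Theorem 1, value statement) Suppose γ_SR[n] is non-increasing in n and γ_RD[n] is non-decreasing in n. Then the optimal value of the throughput maximization problem (P1) equals min{ R̄_s(E_s), R̄_r(E_r) }, where R̄_s(E_s) is the maximum of ∑_{n=1}^{N−1} log₂(1+p_s[n]γ_SR[n]) subject to ∑ p_s[n] ≤ E_s, p_s ≥ 0, and R̄_r(E_r) is the maximum of ∑_{n=2}^{N} log₂(1+p_r[n]γ_RD[n]) subject to ∑ p_r[n] ≤ E_r, p_r ≥ 0. -/
/-!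
The power for rate `x` on gain `γ` is `(2^x - 1)/γ`, so by the rearrangement inequality the
per-slot rates of an allocation may be permuted so that larger rates sit on better channels
without changing the rate sum or increasing the power. Hence the source rates may be taken
non-increasing and the relay rates non-decreasing in time. After scaling the relay rates so that
their total is the smaller of the two rate sums, Chebyshev's sum inequality shows that each
prefix of the relay rates carries at most its proportional share of that total and each prefix
of the source rates at least its share, which is causality. The converse bound is causality at
`n = N`.
-/

open Finset Real

theorem csSup_eq_min_csSup {α : Type*} [ConditionallyCompleteLinearOrder α] {S A B : Set α}
    (hA : A.Nonempty) (hB : B.Nonempty) (hA' : BddAbove A) (hB' : BddAbove B)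
    (hSA : ∀ v ∈ S, ∃ a ∈ A, v ≤ a) (hSB : ∀ v ∈ S, ∃ b ∈ B, v ≤ b)
    (hAB : ∀ a ∈ A, ∀ b ∈ B, min a b ∈ S) : sSup S = min (sSup A) (sSup B) := by
  obtain ⟨a₀, ha₀⟩ := hA
  obtain ⟨b₀, hb₀⟩ := hB
  have hS : S.Nonempty := ⟨_, hAB a₀ ha₀ b₀ hb₀⟩
  have hSA' (v) (hv : v ∈ S) : v ≤ sSup A :=
    let ⟨_, ha, hva⟩ := hSA v hv; hva.trans (le_csSup hA' ha)
  have hSB' (v) (hv : v ∈ S) : v ≤ sSup B :=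
    let ⟨_, hb, hvb⟩ := hSB v hv; hvb.trans (le_csSup hB' hb)
  refine le_antisymm (csSup_le hS fun v hv ↦ le_min (hSA' v hv) (hSB' v hv))
    (le_of_forall_lt fun c hc ↦ ?_)
  obtain ⟨a, ha, hca⟩ := exists_lt_of_lt_csSup ⟨a₀, ha₀⟩ (hc.trans_le (min_le_left _ _))
  obtain ⟨b, hb, hcb⟩ := exists_lt_of_lt_csSup ⟨b₀, hb₀⟩ (hc.trans_le (min_le_right _ _))
  exact (lt_min hca hcb).trans_le (le_csSup ⟨sSup A, hSA'⟩ (hAB a ha b hb))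

theorem Equiv.Perm.apply_mem_of_set_support_subset {ι : Type*} {σ : Equiv.Perm ι}
    {s : Finset ι} (hσ : {i | σ i ≠ i} ⊆ s) {i : ι} (hi : i ∈ s) : σ i ∈ s := by
  by_cases h : σ i = i
  · rwa [h]
  · exact hσ (Equiv.Perm.set_support_apply_mem.2 h)

theorem Finset.exists_perm_monotoneOn_comp {ι α : Type*} [LinearOrder ι] [LinearOrder α]
    (s : Finset ι) (f : ι → α) :
    ∃ σ : Equiv.Perm ι, {i | σ i ≠ i} ⊆ s ∧ MonotoneOn (f ∘ σ) s := by
  classical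
  let e := s.orderIsoOfFin rfl
  let τ := Tuple.sort fun a ↦ f (e a)
  refine ⟨Equiv.Perm.ofSubtype (e.symm.toEquiv.trans (τ.trans e.toEquiv)), fun i hi ↦ ?_,
    fun x hx y hy hxy ↦ ?_⟩
  · by_contra h
    exact hi (Equiv.Perm.ofSubtype_apply_of_not_mem _ h)
  · simp only [Function.comp_apply, Equiv.Perm.ofSubtype_apply_of_mem _ (Finset.mem_coe.1 hx),
      Equiv.Perm.ofSubtype_apply_of_mem _ (Finset.mem_coe.1 hy)]
    exact Tuple.monotone_sort (fun a ↦ f (e a)) (e.symm.monotone (Subtype.mk_le_mk.2 hxy))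

theorem Finset.exists_perm_antitoneOn_comp {ι α : Type*} [LinearOrder ι] [LinearOrder α]
    (s : Finset ι) (f : ι → α) :
    ∃ σ : Equiv.Perm ι, {i | σ i ≠ i} ⊆ s ∧ AntitoneOn (f ∘ σ) s :=
  s.exists_perm_monotoneOn_comp (α := αᵒᵈ) (OrderDual.toDual ∘ f)

section Chebyshev

variable {ι α : Type*} [LinearOrder ι] [CommRing α] [LinearOrder α] [IsStrictOrderedRing α]
  {s : Finset ι} {f : ι → α}

theorem MonotoneOn.card_mul_sum_filter_le (hf : MonotoneOn f s) (m : ι) :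
    (#s : α) * ∑ i ∈ s with i ≤ m, f i ≤ #{i ∈ s | i ≤ m} * ∑ i ∈ s, f i := by
  have hfg : AntivaryOn f (fun i ↦ if i ≤ m then (1 : α) else 0) s := by
    intro i hi j hj hij
    dsimp only at hij
    split_ifs at hij with him <;> norm_num at hij
    exact hf hj hi (‹j ≤ m›.trans (not_le.1 him).le)
  simpa [Finset.sum_filter, Finset.sum_boole, mul_comm] using hfg.card_mul_sum_le_sum_mul_sum

theorem AntitoneOn.card_filter_mul_sum_le (hf : AntitoneOn f s) (m : ι) :
    (#{i ∈ s | i ≤ m} : α) * ∑ i ∈ s, f i ≤ #s * ∑ i ∈ s with i ≤ m, f i := by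
  simpa [Finset.sum_neg_distrib] using hf.neg.card_mul_sum_filter_le m

end Chebyshev

noncomputable def powerOfRate (γ x : ℝ) : ℝ := (2 ^ x - 1) / γ

theorem logb_one_add_powerOfRate_mul {γ : ℝ} (hγ : γ ≠ 0) (x : ℝ) :
    logb 2 (1 + powerOfRate γ x * γ) = x := by
  rw [powerOfRate, div_mul_cancel₀ _ hγ, add_sub_cancel, logb_rpow two_pos (by norm_num)]

theorem powerOfRate_logb_one_add_mul {γ p : ℝ} (hγ : 0 < γ) (hp : 0 ≤ p) :
    powerOfRate γ (logb 2 (1 + p * γ)) = p := by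
  rw [powerOfRate, rpow_logb two_pos (by norm_num) (by positivity), add_sub_cancel_left,
    mul_div_cancel_right₀ _ hγ.ne']

theorem powerOfRate_nonneg {γ x : ℝ} (hγ : 0 ≤ γ) (hx : 0 ≤ x) : 0 ≤ powerOfRate γ x :=
  div_nonneg (sub_nonneg.2 (one_le_rpow one_le_two hx)) hγ

theorem powerOfRate_le_powerOfRate {γ x y : ℝ} (hγ : 0 ≤ γ) (hxy : x ≤ y) :
    powerOfRate γ x ≤ powerOfRate γ y := by
  unfold powerOfRate
  gcongr
  norm_num

theorem sum_powerOfRate_comp_perm_le {ι : Type*} {s : Finset ι} {γ x : ι → ℝ}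
    {σ : Equiv.Perm ι} (hγ : ∀ i ∈ s, 0 < γ i) (hσ : {i | σ i ≠ i} ⊆ s)
    (hxγ : MonovaryOn (x ∘ σ) γ s) :
    ∑ i ∈ s, powerOfRate (γ i) (x (σ i)) ≤ ∑ i ∈ s, powerOfRate (γ i) (x i) := by
  have hanti : AntivaryOn (fun i ↦ (2 : ℝ) ^ x (σ i) - 1) (fun i ↦ (γ i)⁻¹) s := by
    intro i hi j hj hij
    have hx := hxγ hj hi ((inv_lt_inv₀ (hγ i hi) (hγ j hj)).1 hij)
    exact sub_le_sub_right (rpow_le_rpow_of_exponent_le one_le_two hx) 1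
  calc ∑ i ∈ s, powerOfRate (γ i) (x (σ i))
      = ∑ i ∈ s, ((2 : ℝ) ^ x (σ i) - 1) • (γ i)⁻¹ := by
        simp only [powerOfRate, smul_eq_mul, div_eq_mul_inv]
    _ ≤ ∑ i ∈ s, ((2 : ℝ) ^ x (σ i) - 1) • (γ (σ i))⁻¹ :=
        hanti.sum_smul_le_sum_smul_comp_perm hσ
    _ = ∑ i ∈ s, powerOfRate (γ i) (x i) := by
      simpa only [powerOfRate, smul_eq_mul, div_eq_mul_inv]
        using σ.sum_comp s (fun i ↦ powerOfRate (γ i) (x i)) hσ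

/-- The achievable rate sums of one link; its `sSup` is the water-filling capacity `R̄(E)`. -/
def capacitySet (s : Finset ℕ) (γ : ℕ → ℝ) (E : ℝ) : Set ℝ :=
  {v | ∃ p : ℕ → ℝ, (∀ n ∈ s, 0 ≤ p n) ∧ (∑ n ∈ s, p n) ≤ E ∧
    v = ∑ n ∈ s, logb 2 (1 + p n * γ n)}

theorem zero_mem_capacitySet {s : Finset ℕ} {γ : ℕ → ℝ} {E : ℝ} (hE : 0 ≤ E) :
    0 ∈ capacitySet s γ E :=
  ⟨0, fun _ _ ↦ le_rfl, by simpa using hE, by simp⟩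

theorem bddAbove_capacitySet {s : Finset ℕ} {γ : ℕ → ℝ} {E : ℝ} (hγ : ∀ n ∈ s, 0 ≤ γ n) :
    BddAbove (capacitySet s γ E) := by
  refine ⟨∑ n ∈ s, logb 2 (1 + E * γ n), ?_⟩
  rintro v ⟨p, hp, hpE, rfl⟩
  refine sum_le_sum fun n hn ↦ logb_le_logb_of_le one_lt_two ?_ ?_
  · nlinarith [hp n hn, hγ n hn]
  · have := (single_le_sum hp hn).trans hpE
    nlinarith [hγ n hn]

theorem exists_rates_of_mem_capacitySet {s : Finset ℕ} {γ : ℕ → ℝ} {E v : ℝ}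
    (hγ : ∀ n ∈ s, 0 < γ n) (hv : v ∈ capacitySet s γ E) :
    ∃ x : ℕ → ℝ, (∀ n ∈ s, 0 ≤ x n) ∧ ∑ n ∈ s, powerOfRate (γ n) (x n) ≤ E ∧
      v = ∑ n ∈ s, x n := by
  obtain ⟨p, hp, hpE, rfl⟩ := hv
  refine ⟨fun n ↦ logb 2 (1 + p n * γ n), fun n hn ↦ ?_, ?_, rfl⟩
  · exact logb_nonneg one_lt_two (le_add_of_nonneg_right (mul_nonneg (hp n hn) (hγ n hn).le))
  · rwa [sum_congr rfl fun n hn ↦ powerOfRate_logb_one_add_mul (hγ n hn) (hp n hn)]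

/-- The objective values of (P1); its `sSup` is the optimal value. -/
def causalThroughputSet (N : ℕ) (γSR γRD : ℕ → ℝ) (Es Er : ℝ) : Set ℝ :=
  {v | ∃ ps pr : ℕ → ℝ,
    (∀ n ∈ Icc 1 (N - 1), 0 ≤ ps n) ∧
    (∀ n ∈ Icc 2 N, 0 ≤ pr n) ∧
    (∑ n ∈ Icc 1 (N - 1), ps n) ≤ Es ∧
    (∑ n ∈ Icc 2 N, pr n) ≤ Er ∧
    (∀ n ∈ Icc 2 N,
      (∑ i ∈ Icc 2 n, logb 2 (1 + pr i * γRD i)) ≤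
        ∑ i ∈ Icc 1 (n - 1), logb 2 (1 + ps i * γSR i)) ∧
    v = ∑ n ∈ Icc 2 N, logb 2 (1 + pr n * γRD n)}

section Causal

variable {N : ℕ} {γSR γRD : ℕ → ℝ} {Es Er : ℝ}

theorem sum_mem_causalThroughputSet (hSR0 : ∀ n ∈ Icc 1 (N - 1), 0 < γSR n)
    (hRD0 : ∀ n ∈ Icc 2 N, 0 < γRD n) {ys yr : ℕ → ℝ}
    (hys : ∀ n ∈ Icc 1 (N - 1), 0 ≤ ys n) (hyr : ∀ n ∈ Icc 2 N, 0 ≤ yr n)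
    (hysE : ∑ n ∈ Icc 1 (N - 1), powerOfRate (γSR n) (ys n) ≤ Es)
    (hyrE : ∑ n ∈ Icc 2 N, powerOfRate (γRD n) (yr n) ≤ Er)
    (hcausal : ∀ n ∈ Icc 2 N, ∑ i ∈ Icc 2 n, yr i ≤ ∑ i ∈ Icc 1 (n - 1), ys i) :
    ∑ n ∈ Icc 2 N, yr n ∈ causalThroughputSet N γSR γRD Es Er := by
  have hs (n) (hn : n ∈ Icc 1 (N - 1)) := logb_one_add_powerOfRate_mul (hSR0 n hn).ne' (ys n)
  have hr (n) (hn : n ∈ Icc 2 N) := logb_one_add_powerOfRate_mul (hRD0 n hn).ne' (yr n)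
  refine ⟨fun n ↦ powerOfRate (γSR n) (ys n), fun n ↦ powerOfRate (γRD n) (yr n),
    fun n hn ↦ powerOfRate_nonneg (hSR0 n hn).le (hys n hn),
    fun n hn ↦ powerOfRate_nonneg (hRD0 n hn).le (hyr n hn), hysE, hyrE, fun n hn ↦ ?_,
    (sum_congr rfl hr).symm⟩
  have hnN := (mem_Icc.1 hn).2
  rw [sum_congr rfl fun i hi ↦ hr i (Icc_subset_Icc le_rfl hnN hi),
    sum_congr rfl fun i hi ↦ hs i (Icc_subset_Icc le_rfl (Nat.sub_le_sub_right hnN 1) hi)]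
  exact hcausal n hn

theorem sum_Icc_le_of_antitoneOn_of_monotoneOn {ys yr : ℕ → ℝ}
    (hys : AntitoneOn ys (Icc 1 (N - 1))) (hyr : MonotoneOn yr (Icc 2 N))
    (htotal : ∑ i ∈ Icc 2 N, yr i ≤ ∑ i ∈ Icc 1 (N - 1), ys i) {n : ℕ} (hn : n ∈ Icc 2 N) :
    ∑ i ∈ Icc 2 n, yr i ≤ ∑ i ∈ Icc 1 (n - 1), ys i := by
  obtain ⟨h2n, hnN⟩ := mem_Icc.1 hn
  have hr := hyr.card_mul_sum_filter_le n
  have hs := hys.card_filter_mul_sum_le (n - 1)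
  have hfr : {i ∈ Icc 2 N | i ≤ n} = Icc 2 n := by ext; simp; omega
  have hfs : {i ∈ Icc 1 (N - 1) | i ≤ n - 1} = Icc 1 (n - 1) := by ext; simp; omega
  have hcard : #(Icc 1 (N - 1)) = #(Icc 2 N) := by simp only [Nat.card_Icc]; omega
  have hcard' : #(Icc 1 (n - 1)) = #(Icc 2 n) := by simp only [Nat.card_Icc]; omega
  have hpos : (0 : ℝ) < #(Icc 2 N) := by simp only [Nat.card_Icc, Nat.cast_pos]; omega
  rw [hfr] at hr
  rw [hfs, hcard, hcard'] at hs
  refine le_of_mul_le_mul_left ?_ hpos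
  calc (#(Icc 2 N) : ℝ) * ∑ i ∈ Icc 2 n, yr i ≤ #(Icc 2 n) * ∑ i ∈ Icc 2 N, yr i := hr
    _ ≤ #(Icc 2 n) * ∑ i ∈ Icc 1 (N - 1), ys i := by gcongr
    _ ≤ #(Icc 2 N) * ∑ i ∈ Icc 1 (n - 1), ys i := hs

end Causal

theorem min_mem_causalThroughputSet {N : ℕ} {γSR γRD : ℕ → ℝ} {Es Er a b : ℝ}
    (hSR0 : ∀ n ∈ Icc 1 (N - 1), 0 < γSR n) (hRD0 : ∀ n ∈ Icc 2 N, 0 < γRD n)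
    (hSR : AntitoneOn γSR (Icc 1 (N - 1))) (hRD : MonotoneOn γRD (Icc 2 N))
    (ha : a ∈ capacitySet (Icc 1 (N - 1)) γSR Es) (hb : b ∈ capacitySet (Icc 2 N) γRD Er) :
    min a b ∈ causalThroughputSet N γSR γRD Es Er := by
  obtain ⟨xs, hxs, hxsE, rfl⟩ := exists_rates_of_mem_capacitySet hSR0 ha
  obtain ⟨xr, hxr, hxrE, rfl⟩ := exists_rates_of_mem_capacitySet hRD0 hb
  obtain ⟨σs, hσs, hσs_anti⟩ := (Icc 1 (N - 1)).exists_perm_antitoneOn_comp xs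
  obtain ⟨σr, hσr, hσr_mono⟩ := (Icc 2 N).exists_perm_monotoneOn_comp xr
  set a := ∑ n ∈ Icc 1 (N - 1), xs n
  set b := ∑ n ∈ Icc 2 N, xr n
  have ha0 : 0 ≤ a := sum_nonneg hxs
  have hb0 : 0 ≤ b := sum_nonneg hxr
  set c := min a b / b
  have hc0 : 0 ≤ c := div_nonneg (le_min ha0 hb0) hb0
  have hc1 : c ≤ 1 := div_le_one_of_le₀ (min_le_right a b) hb0
  have hsum_s : ∑ n ∈ Icc 1 (N - 1), xs (σs n) = a := σs.sum_comp _ xs hσs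
  -- when `b = 0`, both `c = min a b / 0 = 0` and `min a b = 0`
  have hsum_r : ∑ n ∈ Icc 2 N, c * xr (σr n) = min a b := by
    rw [← mul_sum, σr.sum_comp _ xr hσr]
    exact div_mul_cancel_of_imp fun hb_zero ↦ by rw [hb_zero, min_eq_right ha0]
  have hxr_σ (n) (hn : n ∈ Icc 2 N) : 0 ≤ xr (σr n) :=
    hxr _ (Equiv.Perm.apply_mem_of_set_support_subset hσr hn)
  rw [← hsum_r]
  refine sum_mem_causalThroughputSet hSR0 hRD0
    (fun n hn ↦ hxs _ (Equiv.Perm.apply_mem_of_set_support_subset hσs hn))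
    (fun n hn ↦ mul_nonneg hc0 (hxr_σ n hn))
    ((sum_powerOfRate_comp_perm_le hSR0 hσs (hσs_anti.monovaryOn hSR)).trans hxsE) ?_
    (fun n hn ↦ sum_Icc_le_of_antitoneOn_of_monotoneOn hσs_anti
      (fun i hi j hj hij ↦ mul_le_mul_of_nonneg_left (hσr_mono hi hj hij) hc0)
      (hsum_r.trans_le ((min_le_left a b).trans hsum_s.ge)) hn)
  calc ∑ n ∈ Icc 2 N, powerOfRate (γRD n) (c * xr (σr n))
      ≤ ∑ n ∈ Icc 2 N, powerOfRate (γRD n) (xr (σr n)) :=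
        sum_le_sum fun n hn ↦ powerOfRate_le_powerOfRate (hRD0 n hn).le
          (mul_le_of_le_one_left (hxr_σ n hn) hc1)
    _ ≤ ∑ n ∈ Icc 2 N, powerOfRate (γRD n) (xr n) :=
        sum_powerOfRate_comp_perm_le hRD0 hσr (hσr_mono.monovaryOn hRD)
    _ ≤ Er := hxrE

/-- Theorem 1 (value statement): with `γ_SR` non-increasing and `γ_RD`
non-decreasing, the optimal value of (P1) equals the minimum of the two
individual-link water-filling capacities `R̄_s(E_s)` and `R̄_r(E_r)`. -/
theorem stmt_11 (N : ℕ) (hN : 2 ≤ N) (γSR γRD : ℕ → ℝ)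
    (hSR0 : ∀ n ∈ Finset.Icc 1 (N - 1), 0 < γSR n)
    (hRD0 : ∀ n ∈ Finset.Icc 2 N, 0 < γRD n)
    (hSR : ∀ m ∈ Finset.Icc 1 (N - 1), ∀ n ∈ Finset.Icc 1 (N - 1), m ≤ n → γSR n ≤ γSR m)
    (hRD : ∀ m ∈ Finset.Icc 2 N, ∀ n ∈ Finset.Icc 2 N, m ≤ n → γRD m ≤ γRD n)
    (Es Er : ℝ) (hEs : 0 < Es) (hEr : 0 < Er) :
    sSup {v : ℝ | ∃ ps pr : ℕ → ℝ,
        (∀ n ∈ Finset.Icc 1 (N - 1), 0 ≤ ps n) ∧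
        (∀ n ∈ Finset.Icc 2 N, 0 ≤ pr n) ∧
        (∑ n ∈ Finset.Icc 1 (N - 1), ps n) ≤ Es ∧
        (∑ n ∈ Finset.Icc 2 N, pr n) ≤ Er ∧
        (∀ n ∈ Finset.Icc 2 N,
          (∑ i ∈ Finset.Icc 2 n, Real.logb 2 (1 + pr i * γRD i)) ≤
            ∑ i ∈ Finset.Icc 1 (n - 1), Real.logb 2 (1 + ps i * γSR i)) ∧
        v = ∑ n ∈ Finset.Icc 2 N, Real.logb 2 (1 + pr n * γRD n)} =
      min
        (sSup {v : ℝ | ∃ ps : ℕ → ℝ,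
          (∀ n ∈ Finset.Icc 1 (N - 1), 0 ≤ ps n) ∧
          (∑ n ∈ Finset.Icc 1 (N - 1), ps n) ≤ Es ∧
          v = ∑ n ∈ Finset.Icc 1 (N - 1), Real.logb 2 (1 + ps n * γSR n)})
        (sSup {v : ℝ | ∃ pr : ℕ → ℝ,
          (∀ n ∈ Finset.Icc 2 N, 0 ≤ pr n) ∧
          (∑ n ∈ Finset.Icc 2 N, pr n) ≤ Er ∧
          v = ∑ n ∈ Finset.Icc 2 N, Real.logb 2 (1 + pr n * γRD n)}) := by
  have hSR' : AntitoneOn γSR (Icc 1 (N - 1)) := fun m hm n hn hmn ↦ hSR m hm n hn hmn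
  have hRD' : MonotoneOn γRD (Icc 2 N) := fun m hm n hn hmn ↦ hRD m hm n hn hmn
  refine csSup_eq_min_csSup (S := causalThroughputSet N γSR γRD Es Er)
    (A := capacitySet (Icc 1 (N - 1)) γSR Es) (B := capacitySet (Icc 2 N) γRD Er)
    ⟨0, zero_mem_capacitySet hEs.le⟩ ⟨0, zero_mem_capacitySet hEr.le⟩
    (bddAbove_capacitySet fun n hn ↦ (hSR0 n hn).le)
    (bddAbove_capacitySet fun n hn ↦ (hRD0 n hn).le) (fun v hv ↦ ?_) (fun v hv ↦ ?_)
    (fun a ha b hb ↦ min_mem_causalThroughputSet hSR0 hRD0 hSR' hRD' ha hb)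
  · obtain ⟨ps, pr, hps, -, hpsE, -, hcausal, rfl⟩ := hv
    exact ⟨_, ⟨ps, hps, hpsE, rfl⟩, hcausal N (right_mem_Icc.2 hN)⟩
  · obtain ⟨ps, pr, -, hpr, -, hprE, -, rfl⟩ := hv
    exact ⟨_, ⟨pr, hpr, hprE, rfl⟩, le_rfl⟩
end

section
/- (Upper bound half of Theorem 1) For any feasible solution of (P1), the objective ∑_{n=2}^N log₂(1+p_r[n]γ_RD[n]) is at most min{R̄_s(E_s), R̄_r(E_r)}: it is at most R̄_r(E_r) since the relay power budget alone caps it, and at most R̄_s(E_s) by the causality constraint at n = N combined with the source power budget. -/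
open Finset

section PowerAllocation

variable {b : ℝ} {s : Finset ℕ} {γ p : ℕ → ℝ} {E : ℝ}

-- Each slot gets at most the whole budget, so `∑ logb b (1 + E γₙ)` bounds every rate.
lemma bddAbove_rates (hb : 1 < b) (hγ : ∀ n ∈ s, 0 ≤ γ n) :
    BddAbove {v : ℝ | ∃ p : ℕ → ℝ,
      (∀ n ∈ s, 0 ≤ p n) ∧ (∑ n ∈ s, p n) ≤ E ∧
      v = ∑ n ∈ s, Real.logb b (1 + p n * γ n)} := by
  refine ⟨∑ n ∈ s, Real.logb b (1 + E * γ n), ?_⟩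
  rintro v ⟨p, hp0, hpE, rfl⟩
  refine sum_le_sum fun n hn => ?_
  have hpnE : p n ≤ E := (single_le_sum hp0 hn).trans hpE
  have hpos : 0 < 1 + p n * γ n := by
    have := mul_nonneg (hp0 n hn) (hγ n hn)
    linarith
  exact Real.logb_le_logb_of_le hb hpos (by nlinarith [hγ n hn])

lemma rate_le_sSup_rates (hb : 1 < b) (hγ : ∀ n ∈ s, 0 ≤ γ n)
    (hp0 : ∀ n ∈ s, 0 ≤ p n) (hpE : (∑ n ∈ s, p n) ≤ E) :
    (∑ n ∈ s, Real.logb b (1 + p n * γ n)) ≤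
      sSup {v : ℝ | ∃ p' : ℕ → ℝ,
        (∀ n ∈ s, 0 ≤ p' n) ∧ (∑ n ∈ s, p' n) ≤ E ∧
        v = ∑ n ∈ s, Real.logb b (1 + p' n * γ n)} :=
  le_csSup (bddAbove_rates hb hγ) ⟨p, hp0, hpE, rfl⟩

end PowerAllocation

theorem stmt_12_general (N : ℕ) (hN : 2 ≤ N) (γSR γRD : ℕ → ℝ)
    (hSR0 : ∀ n ∈ Finset.Icc 1 (N - 1), 0 < γSR n)
    (hRD0 : ∀ n ∈ Finset.Icc 2 N, 0 < γRD n)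
    (Es Er : ℝ) :
    ∀ ps pr : ℕ → ℝ,
      (∀ n ∈ Finset.Icc 1 (N - 1), 0 ≤ ps n) →
      (∀ n ∈ Finset.Icc 2 N, 0 ≤ pr n) →
      (∑ n ∈ Finset.Icc 1 (N - 1), ps n) ≤ Es →
      (∑ n ∈ Finset.Icc 2 N, pr n) ≤ Er →
      (∀ n ∈ Finset.Icc 2 N,
        (∑ i ∈ Finset.Icc 2 n, Real.logb 2 (1 + pr i * γRD i)) ≤
          ∑ i ∈ Finset.Icc 1 (n - 1), Real.logb 2 (1 + ps i * γSR i)) →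
      (∑ n ∈ Finset.Icc 2 N, Real.logb 2 (1 + pr n * γRD n)) ≤
        min
          (sSup {v : ℝ | ∃ ps' : ℕ → ℝ,
            (∀ n ∈ Finset.Icc 1 (N - 1), 0 ≤ ps' n) ∧
            (∑ n ∈ Finset.Icc 1 (N - 1), ps' n) ≤ Es ∧
            v = ∑ n ∈ Finset.Icc 1 (N - 1), Real.logb 2 (1 + ps' n * γSR n)})
          (sSup {v : ℝ | ∃ pr' : ℕ → ℝ,
            (∀ n ∈ Finset.Icc 2 N, 0 ≤ pr' n) ∧
            (∑ n ∈ Finset.Icc 2 N, pr' n) ≤ Er ∧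
            v = ∑ n ∈ Finset.Icc 2 N, Real.logb 2 (1 + pr' n * γRD n)}) := by
  intro ps pr hps0 hpr0 hpsE hprE hcausal
  have hcausal_N := hcausal N (mem_Icc.mpr ⟨hN, le_rfl⟩)
  exact le_min
    (hcausal_N.trans
      (rate_le_sSup_rates one_lt_two (fun n hn => (hSR0 n hn).le) hps0 hpsE))
    (rate_le_sSup_rates one_lt_two (fun n hn => (hRD0 n hn).le) hpr0 hprE)

/-- Upper bound half of Theorem 1: for any feasible solution of (P1), the
objective is at most `min{R̄_s(E_s), R̄_r(E_r)}`, the water-filling capacities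
of the two links (no monotonicity of the channels is needed). -/
theorem stmt_12 (N : ℕ) (hN : 2 ≤ N) (γSR γRD : ℕ → ℝ)
    (hSR0 : ∀ n ∈ Finset.Icc 1 (N - 1), 0 < γSR n)
    (hRD0 : ∀ n ∈ Finset.Icc 2 N, 0 < γRD n)
    (Es Er : ℝ) (hEs : 0 < Es) (hEr : 0 < Er) :
    ∀ ps pr : ℕ → ℝ,
      (∀ n ∈ Finset.Icc 1 (N - 1), 0 ≤ ps n) →
      (∀ n ∈ Finset.Icc 2 N, 0 ≤ pr n) →
      (∑ n ∈ Finset.Icc 1 (N - 1), ps n) ≤ Es →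
      (∑ n ∈ Finset.Icc 2 N, pr n) ≤ Er →
      (∀ n ∈ Finset.Icc 2 N,
        (∑ i ∈ Finset.Icc 2 n, Real.logb 2 (1 + pr i * γRD i)) ≤
          ∑ i ∈ Finset.Icc 1 (n - 1), Real.logb 2 (1 + ps i * γSR i)) →
      (∑ n ∈ Finset.Icc 2 N, Real.logb 2 (1 + pr n * γRD n)) ≤
        min
          (sSup {v : ℝ | ∃ ps' : ℕ → ℝ,
            (∀ n ∈ Finset.Icc 1 (N - 1), 0 ≤ ps' n) ∧
            (∑ n ∈ Finset.Icc 1 (N - 1), ps' n) ≤ Es ∧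
            v = ∑ n ∈ Finset.Icc 1 (N - 1), Real.logb 2 (1 + ps' n * γSR n)})
          (sSup {v : ℝ | ∃ pr' : ℕ → ℝ,
            (∀ n ∈ Finset.Icc 2 N, 0 ≤ pr' n) ∧
            (∑ n ∈ Finset.Icc 2 N, pr' n) ≤ Er ∧
            v = ∑ n ∈ Finset.Icc 2 N, Real.logb 2 (1 + pr' n * γRD n)}) :=
  stmt_12_general N hN γSR γRD hSR0 hRD0 Es Er
end

section
/- (Achievability half of Theorem 1) Suppose γ_SR[n] is non-increasing and γ_RD[n] is non-decreasing. If R̄_s(E_s) ≤ R̄_r(E_r), let Ê_r ∈ [0,E_r] satisfy R̄_r(Ê_r) = R̄_s(E_s); then the pair consisting of the classic water-filling allocation for the source with total power E_s and the classic water-filling allocation for the relay with total power Ê_r is feasible for (P1) (i.e., satisfies all causality constraints) and achieves objective value R̄_s(E_s). -/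
/-!
With `[x]⁺ = max x 0`, the water-filling rate `log₂(1 + [η - 1/γ]⁺ γ)` equals `[log₂(η γ)]⁺`,
so with a fixed water level it is a monotone function of the gain. The source rates are then
non-increasing and the relay rates non-decreasing in time, with equal totals. By Chebyshev's sum
inequality the average of a non-decreasing sequence over an initial segment is at most its overall
average, and the reverse holds for a non-increasing one; since both sequences have `N - 1` terms,
every prefix sum of the relay rates is at most the matching prefix sum of the source rates.
-/

open Finset Real

lemma sum_mul_ite_mem_of_subset {α ι : Type*} [NonAssocSemiring α] [DecidableEq ι]
    {s t : Finset ι} (f : ι → α) (hts : t ⊆ s) :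
    ∑ i ∈ s, f i * (if i ∈ t then 1 else 0) = ∑ i ∈ t, f i := by
  simp only [mul_ite, mul_one, mul_zero, sum_ite_mem, inter_eq_right.mpr hts]

lemma lt_of_ite_mem_lt_ite_mem {α ι : Type*} [MulZeroOneClass α] [PartialOrder α]
    [ZeroLEOneClass α] [LinearOrder ι] [DecidableEq ι] {s t : Finset ι}
    (ht : ∀ i ∈ t, ∀ j ∈ s, j ≤ i → j ∈ t) {i j : ι} (hi : i ∈ s)
    (hij : (if i ∈ t then (1 : α) else 0) < if j ∈ t then 1 else 0) : j < i := by
  by_cases hit : i ∈ t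
  · split_ifs at hij
    · exact absurd hij (lt_irrefl 1)
    · exact absurd hij zero_le_one.not_gt
  by_cases hjt : j ∈ t
  · exact lt_of_not_ge fun hji => hit (ht j hjt i hi hji)
  · simp [hit, hjt] at hij

section PrefixAverage

variable {α ι κ : Type*} [Semiring α] [LinearOrder α] [IsStrictOrderedRing α] [ExistsAddOfLE α]
  [LinearOrder ι] [LinearOrder κ]

lemma card_mul_sum_le_card_mul_sum_of_monotoneOn {s t : Finset ι} {f : ι → α}
    (hf : MonotoneOn f s) (hts : t ⊆ s) (ht : ∀ i ∈ t, ∀ j ∈ s, j ≤ i → j ∈ t) :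
    (#s : α) * ∑ i ∈ t, f i ≤ (∑ i ∈ s, f i) * #t := by
  classical
  have hfg : AntivaryOn f (fun i => if i ∈ t then (1 : α) else 0) s :=
    fun i hi j hj hij => hf hj hi (lt_of_ite_mem_lt_ite_mem ht hi hij).le
  simpa [sum_mul_ite_mem_of_subset f hts, sum_ite_mem, inter_eq_right.mpr hts]
    using hfg.card_mul_sum_le_sum_mul_sum

lemma card_mul_sum_le_card_mul_sum_of_antitoneOn {s t : Finset ι} {f : ι → α}
    (hf : AntitoneOn f s) (hts : t ⊆ s) (ht : ∀ i ∈ t, ∀ j ∈ s, j ≤ i → j ∈ t) :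
    (∑ i ∈ s, f i) * #t ≤ #s * ∑ i ∈ t, f i := by
  classical
  have hfg : MonovaryOn f (fun i => if i ∈ t then (1 : α) else 0) s :=
    fun i hi j hj hij => hf hj hi (lt_of_ite_mem_lt_ite_mem ht hi hij).le
  simpa [sum_mul_ite_mem_of_subset f hts, sum_ite_mem, inter_eq_right.mpr hts]
    using hfg.sum_mul_sum_le_card_mul_sum

lemma sum_le_sum_of_monotoneOn_of_antitoneOn {s t : Finset ι} {s' t' : Finset κ}
    {f : ι → α} {g : κ → α} (hf : MonotoneOn f s) (hg : AntitoneOn g s')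
    (hts : t ⊆ s) (ht : ∀ i ∈ t, ∀ j ∈ s, j ≤ i → j ∈ t)
    (hts' : t' ⊆ s') (ht' : ∀ i ∈ t', ∀ j ∈ s', j ≤ i → j ∈ t')
    (hcard : #s = #s') (hcard' : #t = #t') (hsum : ∑ i ∈ s, f i = ∑ i ∈ s', g i) :
    ∑ i ∈ t, f i ≤ ∑ i ∈ t', g i := by
  rcases s.eq_empty_or_nonempty with rfl | hs
  · have : t' = ∅ := card_eq_zero.mp (by simp_all)
    simp_all
  refine le_of_mul_le_mul_left ?_ (Nat.cast_pos.mpr hs.card_pos : (0 : α) < #s)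
  calc (#s : α) * ∑ i ∈ t, f i ≤ (∑ i ∈ s, f i) * #t :=
        card_mul_sum_le_card_mul_sum_of_monotoneOn hf hts ht
    _ = (∑ i ∈ s', g i) * #t' := by rw [hcard', hsum]
    _ ≤ #s' * ∑ i ∈ t', g i := card_mul_sum_le_card_mul_sum_of_antitoneOn hg hts' ht'
    _ = #s * ∑ i ∈ t', g i := by rw [hcard]

end PrefixAverage

lemma one_add_max_sub_one_div_mul {γ : ℝ} (hγ : 0 < γ) (c : ℝ) :
    1 + max (c - 1 / γ) 0 * γ = max (c * γ) 1 := by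
  rw [max_mul_of_nonneg _ _ hγ.le, zero_mul, sub_mul, one_div, inv_mul_cancel₀ hγ.ne',
    ← max_add_add_left]
  simp

namespace Real

lemma logb_max_one {b x : ℝ} (hb : 1 < b) (hx : 0 ≤ x) :
    logb b (max x 1) = max (logb b x) 0 := by
  rcases le_total x 1 with h | h
  · simp [max_eq_right h, logb_nonpos hb hx h]
  · simp [max_eq_left h, logb_nonneg hb h]

lemma monotoneOn_max_logb_zero {b : ℝ} (hb : 1 < b) :
    MonotoneOn (fun x => max (logb b x) 0) (Set.Ici 0) := by
  intro x hx y hy hxy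
  simp only [← logb_max_one hb hx, ← logb_max_one hb hy]
  exact logb_le_logb_of_le hb (by positivity) (max_le_max hxy le_rfl)

lemma logb_one_add_max_sub_one_div_mul {b c γ : ℝ} (hb : 1 < b) (hc : 0 ≤ c) (hγ : 0 < γ) :
    logb b (1 + max (c - 1 / γ) 0 * γ) = max (logb b (c * γ)) 0 := by
  rw [one_add_max_sub_one_div_mul hγ, logb_max_one hb (by positivity)]

end Real

theorem stmt_13_general (N : ℕ) (γSR γRD : ℕ → ℝ)
    (hSR0 : ∀ n ∈ Finset.Icc 1 (N - 1), 0 < γSR n)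
    (hRD0 : ∀ n ∈ Finset.Icc 2 N, 0 < γRD n)
    (hSR : ∀ m ∈ Finset.Icc 1 (N - 1), ∀ n ∈ Finset.Icc 1 (N - 1), m ≤ n → γSR n ≤ γSR m)
    (hRD : ∀ m ∈ Finset.Icc 2 N, ∀ n ∈ Finset.Icc 2 N, m ≤ n → γRD m ≤ γRD n)
    (eta xi : ℝ) (heta : 0 < eta) (hxi : 0 ≤ xi)
    (hmatch : (∑ n ∈ Finset.Icc 2 N, max (Real.logb 2 (xi * γRD n)) 0) =
      ∑ n ∈ Finset.Icc 1 (N - 1), max (Real.logb 2 (eta * γSR n)) 0) :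
    (∀ n ∈ Finset.Icc 2 N,
      (∑ i ∈ Finset.Icc 2 n, Real.logb 2 (1 + max (xi - 1 / γRD i) 0 * γRD i)) ≤
        ∑ i ∈ Finset.Icc 1 (n - 1),
          Real.logb 2 (1 + max (eta - 1 / γSR i) 0 * γSR i)) ∧
    (∑ n ∈ Finset.Icc 2 N, Real.logb 2 (1 + max (xi - 1 / γRD n) 0 * γRD n)) =
      ∑ n ∈ Finset.Icc 1 (N - 1), max (Real.logb 2 (eta * γSR n)) 0 := by
  have hrate_r : ∀ i ∈ Icc 2 N,
      logb 2 (1 + max (xi - 1 / γRD i) 0 * γRD i) = max (logb 2 (xi * γRD i)) 0 :=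
    fun i hi => logb_one_add_max_sub_one_div_mul one_lt_two hxi (hRD0 i hi)
  have hrate_s : ∀ i ∈ Icc 1 (N - 1),
      logb 2 (1 + max (eta - 1 / γSR i) 0 * γSR i) = max (logb 2 (eta * γSR i)) 0 :=
    fun i hi => logb_one_add_max_sub_one_div_mul one_lt_two heta.le (hSR0 i hi)
  have hmono_r : MonotoneOn (fun i => max (logb 2 (xi * γRD i)) 0) (Icc 2 N : Set ℕ) :=
    (monotoneOn_max_logb_zero one_lt_two).comp (fun m hm n hn hmn =>
      mul_le_mul_of_nonneg_left (hRD m hm n hn hmn) hxi)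
      fun i hi => mul_nonneg hxi (hRD0 i hi).le
  have hanti_s : AntitoneOn (fun i => max (logb 2 (eta * γSR i)) 0) (Icc 1 (N - 1) : Set ℕ) :=
    (monotoneOn_max_logb_zero one_lt_two).comp_AntitoneOn (fun m hm n hn hmn =>
      mul_le_mul_of_nonneg_left (hSR m hm n hn hmn) heta.le)
      fun i hi => mul_nonneg heta.le (hSR0 i hi).le
  refine ⟨fun n hn => ?_, (sum_congr rfl hrate_r).trans hmatch⟩
  have hn' := mem_Icc.mp hn
  rw [sum_congr rfl fun i hi => hrate_r i (Icc_subset_Icc_right hn'.2 hi),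
    sum_congr rfl fun i hi => hrate_s i (Icc_subset_Icc_right (by omega) hi)]
  refine sum_le_sum_of_monotoneOn_of_antitoneOn hmono_r hanti_s
    (Icc_subset_Icc_right hn'.2) ?_ (Icc_subset_Icc_right (by omega)) ?_ ?_ ?_ hmatch
  all_goals
    simp only [mem_Icc, Nat.card_Icc]
    omega

/-- Achievability half of Theorem 1: with monotone channels, if
`R̄_s(E_s) ≤ R̄_r(E_r)` and `Ê_r ∈ [0,E_r]` is chosen so that the relay
water-filling (water level ξ, total power Ê_r) matches the source water-filling
rate (water level η, total power E_s), then the pair of water-filling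
allocations is feasible for (P1) and achieves objective value `R̄_s(E_s)`. -/
theorem stmt_13 (N : ℕ) (hN : 2 ≤ N) (γSR γRD : ℕ → ℝ)
    (hSR0 : ∀ n ∈ Finset.Icc 1 (N - 1), 0 < γSR n)
    (hRD0 : ∀ n ∈ Finset.Icc 2 N, 0 < γRD n)
    (hSR : ∀ m ∈ Finset.Icc 1 (N - 1), ∀ n ∈ Finset.Icc 1 (N - 1), m ≤ n → γSR n ≤ γSR m)
    (hRD : ∀ m ∈ Finset.Icc 2 N, ∀ n ∈ Finset.Icc 2 N, m ≤ n → γRD m ≤ γRD n)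
    (Es Er : ℝ) (hEs : 0 < Es) (hEr : 0 < Er)
    (eta xi Ehatr : ℝ) (heta : 0 < eta) (hxi : 0 ≤ xi)
    (hEhat0 : 0 ≤ Ehatr) (hEhat1 : Ehatr ≤ Er)
    (hWFs : (∑ n ∈ Finset.Icc 1 (N - 1), max (eta - 1 / γSR n) 0) = Es)
    (hWFr : (∑ n ∈ Finset.Icc 2 N, max (xi - 1 / γRD n) 0) = Ehatr)
    (hmatch : (∑ n ∈ Finset.Icc 2 N, max (Real.logb 2 (xi * γRD n)) 0) =
      ∑ n ∈ Finset.Icc 1 (N - 1), max (Real.logb 2 (eta * γSR n)) 0) :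
    (∀ n ∈ Finset.Icc 2 N,
      (∑ i ∈ Finset.Icc 2 n, Real.logb 2 (1 + max (xi - 1 / γRD i) 0 * γRD i)) ≤
        ∑ i ∈ Finset.Icc 1 (n - 1),
          Real.logb 2 (1 + max (eta - 1 / γSR i) 0 * γSR i)) ∧
    (∑ n ∈ Finset.Icc 2 N, Real.logb 2 (1 + max (xi - 1 / γRD n) 0 * γRD n)) =
      ∑ n ∈ Finset.Icc 1 (N - 1), max (Real.logb 2 (eta * γSR n)) 0 :=
  stmt_13_general N γSR γRD hSR0 hRD0 hSR hRD eta xi heta hxi hmatch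
end
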